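/- Let G = (S,E) be a Path-Complete graph on finite nonempty node set S with labels {1,…,M}, let A_1,…,A_M be maps on ℝⁿ, and let (V_s)_{s∈S} satisfy V_d(A_σ x) ≤ V_s(x) for all x and all (s,d,σ) ∈ E. Let 𝒮 ⊆ 2^S \ {∅} be the collection of all nonempty subsets of S reachable from the full set S by iterating the transitions δ_σ(P) = {q : ∃ p ∈ P, (p,q,σ) ∈ E}. Then V*(x) := min_{Q∈𝒮} max_{s∈Q} V_s(x) satisfies V*(A_σ x) ≤ V*(x) for all x ∈ ℝⁿ and all σ ∈ {1,…,M}. -/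

import Mathlib

open scoped Classical

/-- A labeled graph (edges `E s d σ`) is Path-Complete if every finite word
over the labels is carried by some path in the graph. -/
def PathComplete {S : Type*} {M : ℕ} (E : S → S → Fin M → Prop) : Prop :=
  ∀ w : List (Fin M), ∃ path : Fin (w.length + 1) → S,
    ∀ i : Fin w.length, E (path i.castSucc) (path i.succ) (w.get i)

/-- The observer transition: image of a finset of nodes under the σ-labeled edges. -/
noncomputable def obsDelta {S : Type*} [Fintype S] {M : ℕ}
    (E : S → S → Fin M → Prop) (σ : Fin M) (P : Finset S) : Finset S :=
  Finset.univ.filter (fun q => ∃ p ∈ P, E p q σ)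

/-- The collection of all nonempty subsets of `S` reachable from the full set
by iterating the observer transitions. -/
noncomputable def obsFamily {S : Type*} [Fintype S] {M : ℕ}
    (E : S → S → Fin M → Prop) : Finset (Finset S) :=
  Finset.univ.filter (fun Q =>
    (∃ w : List (Fin M), Q = w.foldl (fun P σ => obsDelta E σ P) Finset.univ)
      ∧ Q.Nonempty)

/-
Iterating `obsDelta` from the full node set tracks every path of the graph: the endpoint of
a path carrying the word `w` lies in the set reached after reading `w`. Path-Completeness thus
keeps every reachable set nonempty, so `obsFamily E` is closed under each `obsDelta E σ`. Since
every node of `obsDelta E σ Q` is entered by a σ-edge from `Q`, the max of the `V_d ∘ A_σ` over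
`obsDelta E σ Q` is at most the max of the `V_s` over `Q`; taking the min over `Q` gives the claim.
-/

section ObserverTransition

variable {S : Type*} [Fintype S] {M : ℕ} (E : S → S → Fin M → Prop)

lemma obsDelta_mem {σ : Fin M} {P : Finset S} {p q : S} (hp : p ∈ P) (hpq : E p q σ) :
    q ∈ obsDelta E σ P :=
  Finset.mem_filter.mpr ⟨Finset.mem_univ q, p, hp, hpq⟩

lemma path_last_mem_foldl_obsDelta (w : List (Fin M)) {P : Finset S}
    (path : Fin (w.length + 1) → S) (h0 : path 0 ∈ P)
    (hpath : ∀ i : Fin w.length, E (path i.castSucc) (path i.succ) (w.get i)) :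
    path (Fin.last w.length) ∈ w.foldl (fun P σ => obsDelta E σ P) P := by
  induction w generalizing P with
  | nil => simpa using h0
  | cons σ w ih =>
    have h1 : path 1 ∈ obsDelta E σ P := obsDelta_mem E h0 (hpath 0)
    exact ih (fun i => path i.succ) h1 fun i => by simpa using hpath i.succ

lemma sup'_obsDelta_le {α : Type*} [SemilatticeSup α] {σ : Fin M} {Q : Finset S}
    (hQ : Q.Nonempty) (hδ : (obsDelta E σ Q).Nonempty) {f g : S → α}
    (hfg : ∀ p q, E p q σ → f q ≤ g p) :
    (obsDelta E σ Q).sup' hδ f ≤ Q.sup' hQ g := by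
  refine Finset.sup'_le _ _ fun q hq => ?_
  obtain ⟨p, hp, hpq⟩ := (Finset.mem_filter.mp hq).2
  exact (hfg p q hpq).trans (Finset.le_sup' g hp)

variable {E}

lemma PathComplete.foldl_obsDelta_nonempty (hPC : PathComplete E) (w : List (Fin M)) :
    (w.foldl (fun P σ => obsDelta E σ P) Finset.univ).Nonempty := by
  obtain ⟨path, hpath⟩ := hPC w
  exact ⟨_, path_last_mem_foldl_obsDelta E w path (Finset.mem_univ _) hpath⟩

lemma PathComplete.obsDelta_mem_obsFamily (hPC : PathComplete E) {Q : Finset S}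
    (hQ : Q ∈ obsFamily E) (σ : Fin M) : obsDelta E σ Q ∈ obsFamily E := by
  obtain ⟨w, rfl⟩ := (Finset.mem_filter.mp hQ).2.1
  have hfold : obsDelta E σ (w.foldl (fun P σ => obsDelta E σ P) Finset.univ)
      = (w ++ [σ]).foldl (fun P σ => obsDelta E σ P) Finset.univ := by
    simp [List.foldl_append]
  rw [hfold]
  exact Finset.mem_filter.mpr
    ⟨Finset.mem_univ _, ⟨w ++ [σ], rfl⟩, hPC.foldl_obsDelta_nonempty _⟩

end ObserverTransition

theorem stmt10_general {n M : ℕ} {S : Type*} [Fintype S]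
    (E : S → S → Fin M → Prop) (hPC : PathComplete E)
    (A : Fin M → (Fin n → ℝ) → (Fin n → ℝ))
    (V : S → (Fin n → ℝ) → ℝ)
    (hV : ∀ (s d : S) (σ : Fin M), E s d σ → ∀ x, V d (A σ x) ≤ V s x)
    (hfam : (obsFamily E).attach.Nonempty) :
    ∀ (σ : Fin M) (x : Fin n → ℝ),
      (obsFamily E).attach.inf' hfam
          (fun Q => Q.1.sup' ((Finset.mem_filter.mp Q.2).2.2)
            (fun s => V s (A σ x))) ≤
        (obsFamily E).attach.inf' hfam
          (fun Q => Q.1.sup' ((Finset.mem_filter.mp Q.2).2.2)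
            (fun s => V s x)) := by
  intro σ x
  refine Finset.le_inf' _ _ fun ⟨Q, hQ⟩ _ => ?_
  have hδQ := hPC.obsDelta_mem_obsFamily hQ σ
  calc _ ≤ (obsDelta E σ Q).sup' (Finset.mem_filter.mp hδQ).2.2 (fun s => V s (A σ x)) :=
        Finset.inf'_le _ (Finset.mem_attach _ ⟨_, hδQ⟩)
    _ ≤ Q.sup' (Finset.mem_filter.mp hQ).2.2 (fun s => V s x) :=
        sup'_obsDelta_le E _ _ fun p q hpq => hV p q σ hpq x

theorem stmt10 {n M : ℕ} {S : Type*} [Fintype S] [Nonempty S]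
    (E : S → S → Fin M → Prop) (hPC : PathComplete E)
    (A : Fin M → (Fin n → ℝ) → (Fin n → ℝ))
    (V : S → (Fin n → ℝ) → ℝ)
    (hV : ∀ (s d : S) (σ : Fin M), E s d σ → ∀ x, V d (A σ x) ≤ V s x)
    (hfam : (obsFamily E).attach.Nonempty) :
    ∀ (σ : Fin M) (x : Fin n → ℝ),
      (obsFamily E).attach.inf' hfam
          (fun Q => Q.1.sup' ((Finset.mem_filter.mp Q.2).2.2)
            (fun s => V s (A σ x))) ≤
        (obsFamily E).attach.inf' hfam
          (fun Q => Q.1.sup' ((Finset.mem_filter.mp Q.2).2.2)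
            (fun s => V s x)) :=
  stmt10_general E hPC A V hV hfam
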